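/- If a, b, c are nonzero integers with a^3 + 2b^3 + c^3 = 0, then a = -b = c. -/

import Mathlib

set_option maxHeartbeats 1000000
/-- Eisenstein integers: `m + n*ω` where `ω^2 = -1-ω`. -/
structure Eis where
  m : ℤ
  n : ℤ
  deriving DecidableEq

namespace Eis

theorem ext' {a b : Eis} (h1 : a.m = b.m) (h2 : a.n = b.n) : a = b := by
  cases a; cases b; simp_all

instance : Zero Eis := ⟨⟨0, 0⟩⟩
instance : One Eis := ⟨⟨1, 0⟩⟩
instance : Add Eis := ⟨fun a b => ⟨a.m + b.m, a.n + b.n⟩⟩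
instance : Neg Eis := ⟨fun a => ⟨-a.m, -a.n⟩⟩
instance : Mul Eis := ⟨fun a b => ⟨a.m * b.m - a.n * b.n, a.m * b.n + a.n * b.m - a.n * b.n⟩⟩

@[simp] theorem zero_m : (0 : Eis).m = 0 := rfl
@[simp] theorem zero_n : (0 : Eis).n = 0 := rfl
@[simp] theorem one_m : (1 : Eis).m = 1 := rfl
@[simp] theorem one_n : (1 : Eis).n = 0 := rfl
@[simp] theorem add_m (a b : Eis) : (a + b).m = a.m + b.m := rfl
@[simp] theorem add_n (a b : Eis) : (a + b).n = a.n + b.n := rfl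
@[simp] theorem neg_m (a : Eis) : (-a).m = -a.m := rfl
@[simp] theorem neg_n (a : Eis) : (-a).n = -a.n := rfl
@[simp] theorem mul_m (a b : Eis) : (a * b).m = a.m * b.m - a.n * b.n := rfl
@[simp] theorem mul_n (a b : Eis) : (a * b).n = a.m * b.n + a.n * b.m - a.n * b.n := rfl

instance commRing : CommRing Eis where
  add_assoc a b c := ext' (by simp [add_assoc]) (by simp [add_assoc])
  zero_add a := ext' (by simp) (by simp)
  add_zero a := ext' (by simp) (by simp)
  add_comm a b := ext' (by simp [add_comm]) (by simp [add_comm])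
  neg_add_cancel a := ext' (by simp) (by simp)
  mul_assoc a b c := ext' (by simp; ring) (by simp; ring)
  one_mul a := ext' (by simp) (by simp)
  mul_one a := ext' (by simp) (by simp)
  left_distrib a b c := ext' (by simp; ring) (by simp; ring)
  right_distrib a b c := ext' (by simp; ring) (by simp; ring)
  mul_comm a b := ext' (by simp; ring) (by simp; ring)
  zero_mul a := ext' (by simp) (by simp)
  mul_zero a := ext' (by simp) (by simp)
  nsmul := nsmulRec
  zsmul := zsmulRec



/-- Norm `m^2 - m n + n^2`. -/
def norm (a : Eis) : ℤ := a.m ^ 2 - a.m * a.n + a.n ^ 2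

/-- Conjugate. -/
def conj (a : Eis) : Eis := ⟨a.m - a.n, -a.n⟩

@[simp] theorem conj_m (a : Eis) : (conj a).m = a.m - a.n := rfl
@[simp] theorem conj_n (a : Eis) : (conj a).n = -a.n := rfl

theorem norm_mul (a b : Eis) : norm (a * b) = norm a * norm b := by
  simp [norm]; ring

theorem norm_nonneg (a : Eis) : 0 ≤ norm a := by
  have : 4 * norm a = (2 * a.m - a.n) ^ 2 + 3 * a.n ^ 2 := by simp [norm]; ring
  nlinarith [sq_nonneg (2 * a.m - a.n), sq_nonneg a.n]

theorem norm_eq_zero_iff {a : Eis} : norm a = 0 ↔ a = 0 := by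
  constructor
  · intro h
    have h4 : (2 * a.m - a.n) ^ 2 + 3 * a.n ^ 2 = 0 := by simp [norm] at h; nlinarith
    have hn : a.n = 0 := by nlinarith [sq_nonneg (2 * a.m - a.n), sq_nonneg a.n]
    have hm : a.m = 0 := by nlinarith [sq_nonneg (2 * a.m - a.n)]
    exact ext' hm hn
  · rintro rfl; simp [norm]

theorem norm_pos {a : Eis} (h : a ≠ 0) : 0 < norm a :=
  lt_of_le_of_ne (norm_nonneg a) (fun h' => h (norm_eq_zero_iff.mp h'.symm))

theorem mul_conj (a : Eis) : a * conj a = ⟨norm a, 0⟩ := by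
  refine ext' ?_ ?_ <;> simp [norm] <;> ring

instance : Nontrivial Eis := ⟨⟨0, 1, fun h => by simpa using congrArg Eis.m h⟩⟩

instance : NoZeroDivisors Eis := by
  constructor
  intro a b h
  by_contra hab
  push_neg at hab
  have h0 : norm a * norm b = 0 := by rw [← norm_mul, h]; simp [norm]
  rcases mul_eq_zero.mp h0 with h1 | h1
  · exact (norm_pos hab.1).ne' h1
  · exact (norm_pos hab.2).ne' h1

instance : IsDomain Eis := NoZeroDivisors.to_isDomain _

theorem norm_dvd {a b : Eis} (h : a ∣ b) : norm a ∣ norm b := by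
  obtain ⟨c, rfl⟩ := h; exact ⟨norm c, norm_mul a c⟩

theorem isUnit_of_norm_eq_one {a : Eis} (h : norm a = 1) : IsUnit a :=
  IsUnit.of_mul_eq_one (conj a) (by rw [mul_conj, h]; rfl)


/-- Rounded quotient. -/
def quot (a b : Eis) : Eis :=
  ⟨round (((a * conj b).m : ℚ) / (norm b : ℚ)), round (((a * conj b).n : ℚ) / (norm b : ℚ))⟩

def rem (a b : Eis) : Eis := a - b * quot a b

@[simp] theorem sub_m (a b : Eis) : (a - b).m = a.m - b.m := by
  show (a + -b).m = _; simp [sub_eq_add_neg]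
@[simp] theorem sub_n (a b : Eis) : (a - b).n = a.n - b.n := by
  show (a + -b).n = _; simp [sub_eq_add_neg]

theorem rem_mul_conj (a b : Eis) :
    rem a b * conj b =
      ⟨(a * conj b).m - norm b * (quot a b).m, (a * conj b).n - norm b * (quot a b).n⟩ := by
  refine ext' ?_ ?_ <;> simp [rem, norm] <;> ring

theorem round_close (x d : ℤ) (hd : 0 < d) : 2 * |x - d * round ((x : ℚ) / d)| ≤ d := by
  have hdq : (0 : ℚ) < (d : ℚ) := by exact_mod_cast hd
  have h1 : |(x : ℚ) / d - round ((x : ℚ) / d)| ≤ 1 / 2 := abs_sub_round _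
  have h2 : |(x : ℚ) - d * round ((x : ℚ) / d)| ≤ d / 2 := by
    have h3 : (x : ℚ) - d * round ((x : ℚ) / d) = d * ((x : ℚ) / d - round ((x : ℚ) / d)) := by
      field_simp
    rw [h3, abs_mul, abs_of_pos hdq]
    calc (d : ℚ) * |(x : ℚ) / d - round ((x : ℚ) / d)| ≤ d * (1 / 2) :=
          mul_le_mul_of_nonneg_left h1 hdq.le
      _ = d / 2 := by ring
  have h4 : (2 : ℚ) * |((x - d * round ((x : ℚ) / d) : ℤ) : ℚ)| ≤ (d : ℚ) := by
    push_cast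
    linarith [h2]
  exact_mod_cast h4

theorem norm_rem_lt (a : Eis) {b : Eis} (hb : b ≠ 0) : norm (rem a b) < norm b := by
  set d := norm b with hd
  have hdpos : 0 < d := norm_pos hb
  set c := a * conj b with hc
  set q := quot a b with hq
  have he1 : 2 * |c.m - d * q.m| ≤ d := round_close c.m d hdpos
  have he2 : 2 * |c.n - d * q.n| ≤ d := round_close c.n d hdpos
  set e1 := c.m - d * q.m with he1d
  set e2 := c.n - d * q.n with he2d
  have key : norm (rem a b) * d = e1 ^ 2 - e1 * e2 + e2 ^ 2 := by
    have h5 := norm_mul (rem a b) (conj b)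
    rw [rem_mul_conj] at h5
    have h6 : norm (conj b) = d := by simp [norm, conj, hd]; ring
    rw [h6] at h5
    have h7 : norm (⟨e1, e2⟩ : Eis) = e1 ^ 2 - e1 * e2 + e2 ^ 2 := rfl
    rw [← h5, h7]
  have habs1 : |e1| * |e1| = e1 ^ 2 := by rw [← abs_mul, abs_mul_self]; ring
  have habs2 : |e2| * |e2| = e2 ^ 2 := by rw [← abs_mul, abs_mul_self]; ring
  have hb1 : e1 ^ 2 - e1 * e2 + e2 ^ 2 ≤ e1 ^ 2 + |e1| * |e2| + e2 ^ 2 := by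
    have h8 : -(e1 * e2) ≤ |e1 * e2| := neg_le_abs _
    rw [abs_mul] at h8
    linarith
  have h4 : 4 * (norm (rem a b) * d) ≤ 3 * d ^ 2 := by
    nlinarith [abs_nonneg e1, abs_nonneg e2, he1, he2]
  nlinarith [hdpos]

instance : EuclideanDomain Eis where
  quotient := quot
  quotient_zero a := by
    refine ext' ?_ ?_ <;> simp [quot, norm, conj]
  remainder := rem
  quotient_mul_add_remainder_eq a b := by
    refine ext' ?_ ?_ <;> simp [rem] <;> ring
  r a b := (norm a).toNat < (norm b).toNat
  r_wellFounded := (measure fun x : Eis => (norm x).toNat).wf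
  remainder_lt a b hb := by
    have h := norm_rem_lt a hb
    exact (Int.toNat_lt_toNat (norm_pos hb)).mpr h
  mul_left_not_lt a b hb := by
    intro hlt
    have h1 : norm a * 1 ≤ norm a * norm b := by
      apply mul_le_mul_of_nonneg_left _ (norm_nonneg a)
      exact norm_pos hb
    rw [mul_one, ← norm_mul] at h1
    have := (Int.toNat_le_toNat h1)
    omega

theorem norm_isUnit {u : Eis} (h : IsUnit u) : norm u = 1 := by
  obtain ⟨v, hv⟩ := h.exists_right_inv
  have h1 : norm u * norm v = 1 := by rw [← norm_mul, hv]; rfl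
  exact Int.eq_one_of_mul_eq_one_right (norm_nonneg u) h1

theorem cube_m (γ : Eis) : (γ ^ 3).m = γ.m ^ 3 - 3 * γ.m * γ.n ^ 2 + γ.n ^ 3 := by
  rw [pow_succ, pow_succ, pow_one]
  simp; ring

theorem cube_n (γ : Eis) : (γ ^ 3).n = 3 * γ.m * γ.n * (γ.m - γ.n) := by
  rw [pow_succ, pow_succ, pow_one]
  simp; ring

/-- Rotating by a cube root of unity, we can make the `n`-coordinate even. -/
theorem exists_rotation (γ : Eis) : ∃ γ' : Eis, γ' ^ 3 = γ ^ 3 ∧ 2 ∣ γ'.n := by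
  have hω : (⟨0, 1⟩ : Eis) ^ 3 = 1 := by
    rw [pow_succ, pow_succ, pow_one]
    refine ext' ?_ ?_ <;> simp
  have e1 : ((⟨0, 1⟩ : Eis) * γ).n = γ.m - γ.n := by simp
  have e2 : ((⟨0, 1⟩ : Eis) * ((⟨0, 1⟩ : Eis) * γ)).n = -γ.m := by simp; ring
  rcases Int.even_or_odd γ.n with hn | hn
  · exact ⟨γ, rfl, hn.two_dvd⟩
  rcases Int.even_or_odd γ.m with hm | hm
  · refine ⟨⟨0, 1⟩ * (⟨0, 1⟩ * γ), ?_, ?_⟩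
    · rw [mul_pow, mul_pow, hω, one_mul, one_mul]
    · rw [e2]
      obtain ⟨k, hk⟩ := hm
      exact ⟨-k, by omega⟩
  · refine ⟨⟨0, 1⟩ * γ, ?_, ?_⟩
    · rw [mul_pow, hω, one_mul]
    · rw [e1]
      obtain ⟨k, hk⟩ := hm
      obtain ⟨j, hj⟩ := hn
      exact ⟨k - j, by omega⟩

attribute [local instance] EuclideanDomain.gcdMonoid

/-- Euler's key lemma: a representation `p² + 3q² = b³` with suitable coprimality
comes from cubing `s + t√-3`. -/
theorem _root_.euler_key (p q b : ℤ) (hcop : IsCoprime p q) (hodd : ¬ 2 ∣ (p ^ 2 + 3 * q ^ 2))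
    (h3 : ¬ (3 : ℤ) ∣ p) (hb : p ^ 2 + 3 * q ^ 2 = b ^ 3) :
    ∃ s t : ℤ, p = s ^ 3 - 9 * s * t ^ 2 ∧ q = 3 * s ^ 2 * t - 3 * t ^ 3 := by
  set α : Eis := ⟨p + q, 2 * q⟩ with hα
  have hnormα : norm α = p ^ 2 + 3 * q ^ 2 := by simp [norm, hα]; ring
  have hconj : conj α = ⟨p - q, -(2 * q)⟩ := by refine ext' ?_ ?_ <;> simp [hα] <;> ring
  have hprod : α * conj α = (⟨b, 0⟩ : Eis) ^ 3 := by
    rw [mul_conj, hnormα]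
    refine ext' ?_ ?_
    · rw [cube_m]; simpa using hb
    · rw [cube_n]; simp
  -- every common divisor of α and conj α is a unit
  have hrel : ∀ d : Eis, d ∣ α → d ∣ conj α → IsUnit d := by
    intro d hd1 hd2
    have hsum : d ∣ (⟨2 * p, 0⟩ : Eis) := by
      have : α + conj α = ⟨2 * p, 0⟩ := by rw [hconj]; refine ext' ?_ ?_ <;> simp [hα] <;> ring
      exact this ▸ dvd_add hd1 hd2
    have hdiff : d ∣ (⟨2 * q, 0⟩ : Eis) * ⟨1, 2⟩ := by
      have : α - conj α = (⟨2 * q, 0⟩ : Eis) * ⟨1, 2⟩ := by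
        rw [hconj]; refine ext' ?_ ?_ <;> simp [hα] <;> ring
      exact this ▸ dvd_sub hd1 hd2
    obtain ⟨u, v, huv⟩ := hcop
    have hcomb : d ∣ (⟨2, 0⟩ : Eis) * ⟨1, 2⟩ := by
      have : (⟨2, 0⟩ : Eis) * ⟨1, 2⟩ =
          ⟨u, 0⟩ * (⟨1, 2⟩ * ⟨2 * p, 0⟩) + ⟨v, 0⟩ * ((⟨2 * q, 0⟩ : Eis) * ⟨1, 2⟩) := by
        refine ext' (by simp; linarith [huv]) (by simp; linarith [huv])
      rw [this]
      exact dvd_add (Dvd.dvd.mul_left (Dvd.dvd.mul_left hsum _) _) (Dvd.dvd.mul_left hdiff _)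
    have h12 : norm d ∣ 12 := by
      have := norm_dvd hcomb
      simpa [norm] using this
    have hN : norm d ∣ (p ^ 2 + 3 * q ^ 2) ^ 2 := by
      have h5 : d ∣ α * conj α := Dvd.dvd.mul_right hd1 _
      have := norm_dvd h5
      rw [norm_mul, hnormα] at this
      have h6 : norm (conj α) = p ^ 2 + 3 * q ^ 2 := by rw [hconj]; simp [norm]; ring
      rw [h6, ← sq] at this
      exact this
    -- norm d divides 12 and an odd number coprime to 3, hence is 1
    have h2nd : ¬ 2 ∣ norm d := by
      intro h2
      exact hodd (Int.prime_two.dvd_of_dvd_pow (h2.trans hN))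
    have h3nd : ¬ 3 ∣ norm d := by
      intro h2
      have h33 : (3 : ℤ) ∣ (p ^ 2 + 3 * q ^ 2) := Int.prime_three.dvd_of_dvd_pow (h2.trans hN)
      have : (3 : ℤ) ∣ p ^ 2 := by
        have : (3:ℤ) ∣ p ^ 2 + 3 * q ^ 2 - 3 * q ^ 2 := dvd_sub h33 ⟨q ^ 2, by ring⟩
        simpa using this
      exact h3 (Int.prime_three.dvd_of_dvd_pow this)
    have hpos : 0 < norm d := by
      rcases (norm_nonneg d).lt_or_eq with h | h
      · exact h
      · exfalso; rw [← h] at h12; norm_num at h12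
    have h1 : norm d = 1 := by
      have hle := Int.le_of_dvd (by norm_num) h12
      interval_cases h : (norm d) <;> omega
    exact isUnit_of_norm_eq_one h1
  -- so α is (associated to) a cube
  have hgcd : IsUnit (gcd α (conj α)) := hrel _ (gcd_dvd_left _ _) (gcd_dvd_right _ _)
  obtain ⟨δ, hδ⟩ := exists_associated_pow_of_mul_eq_pow hgcd hprod
  obtain ⟨u, hu⟩ := hδ
  -- rotate δ so that its n-coordinate is even
  obtain ⟨γ, hγ3, hγn⟩ := exists_rotation δ
  have hαγ : γ ^ 3 * (u : Eis) = α := by rw [hγ3, hu]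
  -- parity analysis shows u = ±1
  have hYeven : 2 ∣ (γ ^ 3).n := by
    rw [cube_n]
    obtain ⟨k, hk⟩ := hγn
    exact ⟨3 * γ.m * k * (γ.m - γ.n), by rw [hk]; ring⟩
  have hXodd : ¬ 2 ∣ (γ ^ 3).m := by
    intro hX
    have h7 : norm (γ ^ 3) = norm α := by
      have := congrArg norm hαγ
      rwa [norm_mul, norm_isUnit u.isUnit, mul_one] at this
    have : (2:ℤ) ∣ norm (γ ^ 3) := by
      obtain ⟨x, hx⟩ := hX
      obtain ⟨y, hy⟩ := hYeven
      exact ⟨x * (γ^3).m - x * (γ^3).n + y * (γ^3).n, by simp [norm, hx, hy]; ring⟩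
    rw [h7, hnormα] at this
    exact hodd this
  have hun : 2 ∣ (u : Eis).n := by
    have h8 : α.n = (γ ^ 3).m * (u : Eis).n + (γ ^ 3).n * (u : Eis).m
        - (γ ^ 3).n * (u : Eis).n := by
      rw [← hαγ]; simp
    have h9 : (2:ℤ) ∣ α.n := ⟨q, rfl⟩
    rw [h8] at h9
    rcases hYeven with ⟨y, hy⟩
    have h10 : (2:ℤ) ∣ (γ ^ 3).m * (u : Eis).n := by
      have := dvd_sub h9 (⟨y * (u:Eis).m - y * (u:Eis).n, by rw [hy]; ring⟩ :
        (2:ℤ) ∣ (γ ^ 3).n * (u : Eis).m - (γ ^ 3).n * (u : Eis).n)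
      simpa using this
    rcases (Int.prime_two.dvd_mul.mp h10) with h | h
    · exact absurd h hXodd
    · exact h
  have hu1 : (u : Eis) = 1 ∨ (u : Eis) = -1 := by
    have hnu : norm (u : Eis) = 1 := norm_isUnit u.isUnit
    obtain ⟨w, hw⟩ := hun
    have h11 : ((u:Eis).m - w) ^ 2 + 3 * w ^ 2 = 1 := by
      simp [norm, hw] at hnu ⊢; nlinarith [hnu]
    have hw0 : w = 0 := by nlinarith [sq_nonneg ((u:Eis).m - w)]
    subst hw0
    have hn0 : (u:Eis).n = 0 := by omega
    have h12 : ((u:Eis).m - 1) * ((u:Eis).m + 1) = 0 := by nlinarith [h11]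
    rcases mul_eq_zero.mp h12 with h | h
    · left; exact ext' (by simp; omega) hn0
    · right; refine ext' (by simp; omega) (by simp [hn0])
  -- conclude: α is an honest cube of an element with even n-coordinate
  have hcube : ∃ γ' : Eis, γ' ^ 3 = α ∧ 2 ∣ γ'.n := by
    rcases hu1 with h | h
    · exact ⟨γ, by rw [← hαγ, h, mul_one], hγn⟩
    · refine ⟨-γ, ?_, ?_⟩
      · rw [← hαγ, h]
        ring
      · obtain ⟨k, hk⟩ := hγn
        exact ⟨-k, by simp [hk]⟩
  obtain ⟨γ', hγ'3, hγ'n⟩ := hcube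
  obtain ⟨t, ht⟩ := hγ'n
  refine ⟨γ'.m - t, t, ?_, ?_⟩
  · have hX : (γ' ^ 3).m = p + q := by rw [hγ'3]
    have hY : (γ' ^ 3).n = 2 * q := by rw [hγ'3]
    rw [cube_m] at hX
    rw [cube_n] at hY
    rw [ht] at hX hY
    have h2p : 2 * p = 2 * ((γ'.m - t) ^ 3 - 9 * (γ'.m - t) * t ^ 2) := by
      linear_combination -2 * hX + hY
    linarith [h2p]
  · have hY : (γ' ^ 3).n = 2 * q := by rw [hγ'3]
    rw [cube_n, ht] at hY
    have h2q : 2 * q = 2 * (3 * (γ'.m - t) ^ 2 * t - 3 * t ^ 3) := by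
      linear_combination -hY
    linarith [h2q]

end Eis

section IntPart

theorem int_cube_of_coprime {x y z : ℤ} (h : IsCoprime x y) (hxyz : x * y = z ^ 3) :
    ∃ u : ℤ, x = u ^ 3 := by
  obtain ⟨d, u, hu⟩ := exists_associated_pow_of_mul_eq_pow
    (show IsUnit (gcd x y) from h.isUnit_of_dvd' (gcd_dvd_left x y) (gcd_dvd_right x y)) hxyz
  rcases Int.isUnit_iff.mp u.isUnit with h1 | h1
  · exact ⟨d, by rw [← hu, h1, mul_one]⟩
  · exact ⟨-d, by rw [← hu, h1]; ring⟩

theorem int_cubes3 {x y w a : ℤ} (hxy : IsCoprime x y) (hxw : IsCoprime x w)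
    (hyw : IsCoprime y w) (h : x * (y * w) = a ^ 3) :
    ∃ f g k : ℤ, x = f ^ 3 ∧ y = g ^ 3 ∧ w = k ^ 3 := by
  obtain ⟨f, hf⟩ := int_cube_of_coprime (hxy.mul_right hxw) h
  obtain ⟨g, hg⟩ := int_cube_of_coprime (hxy.symm.mul_right hyw)
    (show y * (x * w) = a ^ 3 by linear_combination h)
  obtain ⟨k, hk⟩ := int_cube_of_coprime (hxw.symm.mul_right hyw.symm)
    (show w * (x * y) = a ^ 3 by linear_combination h)
  exact ⟨f, g, k, hf, hg, hk⟩

theorem int_cube_inj {x y : ℤ} (h : x ^ 3 = y ^ 3) : x = y :=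
  (Odd.strictMono_pow (R := ℤ) (⟨1, by norm_num⟩ : Odd 3)).injective h

theorem parity_helper {P Q : ℤ} (h : ¬ Even (P + Q)) : ¬ Even (P ^ 2 + 3 * Q ^ 2) := by
  simp [parity_simps] at h ⊢
  tauto

/-- Euler: `x³ + y³ = 2 z³` implies `z = 0` or `x = y`. -/
theorem euler_aux (N : ℕ) : ∀ z x y : ℤ, z.natAbs = N → x ^ 3 + y ^ 3 = 2 * z ^ 3 →
    z = 0 ∨ x = y := by
  induction N using Nat.strong_induction_on with
  | _ N IH =>
  intro z x y hN heq
  by_cases hz : z = 0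
  · exact Or.inl hz
  by_cases hxy : x = y
  · exact Or.inr hxy
  exfalso
  by_cases hcop : IsCoprime x y
  swap
  · -- non-coprime case: divide by a common prime
    have hg : Int.gcd x y ≠ 1 := fun h => hcop (Int.isCoprime_iff_gcd_eq_one.mpr h)
    have hg0 : Int.gcd x y ≠ 0 := by
      intro h0
      obtain ⟨hx0, hy0⟩ := Int.gcd_eq_zero_iff.mp h0
      exact hxy (by rw [hx0, hy0])
    have hPp : (Int.gcd x y).minFac.Prime := Nat.minFac_prime hg
    set p : ℕ := (Int.gcd x y).minFac with hpdef
    have hPx : (p : ℤ) ∣ x :=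
      dvd_trans (Int.natCast_dvd_natCast.mpr (Nat.minFac_dvd _)) (Int.gcd_dvd_left x y)
    have hPy : (p : ℤ) ∣ y :=
      dvd_trans (Int.natCast_dvd_natCast.mpr (Nat.minFac_dvd _)) (Int.gcd_dvd_right x y)
    obtain ⟨x1, hx1⟩ := hPx
    obtain ⟨y1, hy1⟩ := hPy
    have hpint : Prime (p : ℤ) := Nat.prime_iff_prime_int.mp hPp
    have hp3 : ((p : ℤ)) ^ 3 ∣ 2 * z ^ 3 := by
      rw [← heq, hx1, hy1]; exact ⟨x1 ^ 3 + y1 ^ 3, by ring⟩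
    have hPz : (p : ℤ) ∣ z := by
      by_cases h2 : p = 2
      · have h2' : (2:ℤ) ∣ z ^ 3 := by
          obtain ⟨c, hc⟩ := hp3
          rw [h2] at hc
          exact ⟨2 * c, by norm_num at hc; linarith⟩
        have : Prime (2:ℤ) := Int.prime_two
        have := this.dvd_of_dvd_pow h2'
        rw [h2]; exact_mod_cast this
      · have hP2 : ¬ (p:ℤ) ∣ 2 := by
          intro hd
          have : p ∣ 2 := Int.natCast_dvd_natCast.mp (by exact_mod_cast hd)
          exact h2 ((Nat.prime_dvd_prime_iff_eq hPp Nat.prime_two).mp this)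
        have h1 : (p:ℤ) ∣ 2 * z ^ 3 := dvd_trans (dvd_pow_self _ (by norm_num)) hp3
        rcases hpint.dvd_mul.mp h1 with h | h
        · exact absurd h hP2
        · exact hpint.dvd_of_dvd_pow h
    obtain ⟨z1, hz1⟩ := hPz
    have hne : (p:ℤ) ≠ 0 := by exact_mod_cast hPp.ne_zero
    have heq' : x1 ^ 3 + y1 ^ 3 = 2 * z1 ^ 3 := by
      have h5 := heq
      rw [hx1, hy1, hz1] at h5
      exact mul_left_cancel₀ (pow_ne_zero 3 hne) (by linear_combination h5)
    have hz1ne : z1 ≠ 0 := fun h => hz (by rw [hz1, h, mul_zero])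
    have hlt : z1.natAbs < N := by
      have : z.natAbs = p * z1.natAbs := by rw [hz1, Int.natAbs_mul, Int.natAbs_natCast]
      have hp2 : 2 ≤ p := hPp.two_le
      have : 2 * z1.natAbs ≤ z.natAbs := by
        rw [this]; exact Nat.mul_le_mul_right _ hp2
      have hz1n : z1.natAbs ≠ 0 := Int.natAbs_ne_zero.mpr hz1ne
      omega
    rcases IH _ hlt z1 x1 y1 rfl heq' with h | h
    · exact hz1ne h
    · exact hxy (by rw [hx1, hy1, h])
  · -- coprime case : Euler's machinery
    have hunit2 : ¬ IsUnit (2:ℤ) := by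
      intro h2
      rcases Int.isUnit_iff.mp h2 with h | h <;> norm_num at h
    have hxodd : ¬ Even x := by
      intro hx
      have hsum : Even (x ^ 3 + y ^ 3) := ⟨z ^ 3, by linarith⟩
      have hy3 : Even (y ^ 3) := (Int.even_add.mp hsum).mp (Int.even_pow.mpr ⟨hx, by norm_num⟩)
      have hy : Even y := (Int.even_pow.mp hy3).1
      obtain ⟨cx, hcx⟩ := hx
      obtain ⟨cy, hcy⟩ := hy
      exact hunit2 (hcop.isUnit_of_dvd' ⟨cx, by omega⟩ ⟨cy, by omega⟩)
    have hyodd : ¬ Even y := by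
      intro hy
      have hsum : Even (x ^ 3 + y ^ 3) := ⟨z ^ 3, by linarith⟩
      have hx3 : Even (x ^ 3) := (Int.even_add.mp hsum).mpr (Int.even_pow.mpr ⟨hy, by norm_num⟩)
      have hx : Even x := (Int.even_pow.mp hx3).1
      obtain ⟨cx, hcx⟩ := hx
      obtain ⟨cy, hcy⟩ := hy
      exact hunit2 (hcop.isUnit_of_dvd' ⟨cx, by omega⟩ ⟨cy, by omega⟩)
    obtain ⟨P, hP⟩ : ∃ P, x + y = 2 * P := by
      have : Even (x + y) := Int.even_add.mpr (by tauto)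
      obtain ⟨c, hc⟩ := this; exact ⟨c, by omega⟩
    obtain ⟨Q, hQ⟩ : ∃ Q, x - y = 2 * Q := by
      have : Even (x - y) := Int.even_sub.mpr (by tauto)
      obtain ⟨c, hc⟩ := this; exact ⟨c, by omega⟩
    have hxv : x = P + Q := by omega
    have hyv : y = P - Q := by omega
    have hz3 : z ^ 3 = P * (P ^ 2 + 3 * Q ^ 2) := by
      have h5 := heq
      rw [hxv, hyv] at h5
      exact mul_left_cancel₀ two_ne_zero
        (show (2:ℤ) * z ^ 3 = 2 * (P * (P ^ 2 + 3 * Q ^ 2)) by linear_combination -h5)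
    have hQ0 : Q ≠ 0 := fun h => hxy (by omega)
    have hP0 : P ≠ 0 := by
      intro h
      apply hz
      have : z ^ 3 = 0 := by rw [hz3, h, zero_mul]
      exact pow_eq_zero_iff (by norm_num) |>.mp this
    have hcopPQ : IsCoprime P Q := by
      obtain ⟨u, v, huv⟩ := hcop
      rw [hxv, hyv] at huv
      exact ⟨u + v, u - v, by linear_combination huv⟩
    have hPQodd : ¬ Even (P + Q) := by rw [← hxv]; exact hxodd
    have hparity : ¬ 2 ∣ (P ^ 2 + 3 * Q ^ 2) := by
      intro hd
      obtain ⟨c, hc⟩ := hd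
      exact parity_helper hPQodd ⟨c, by omega⟩
    have hX4 : 4 ≤ P ^ 2 + 3 * Q ^ 2 := by
      have h1 : 1 ≤ P ^ 2 := by
        have h0 : 0 < P ^ 2 := pow_two_pos_of_ne_zero hP0
        linarith [Int.add_one_le_iff.mpr h0]
      have h2 : 1 ≤ Q ^ 2 := by
        have h0 : 0 < Q ^ 2 := pow_two_pos_of_ne_zero hQ0
        linarith [Int.add_one_le_iff.mpr h0]
      nlinarith
    by_cases h3P : (3:ℤ) ∣ P
    · -- case 3 ∣ P
      obtain ⟨R, hR⟩ := h3P
      have hz9 : z ^ 3 = 9 * R * (Q ^ 2 + 3 * R ^ 2) := by rw [hz3, hR]; ring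
      have hQ3 : ¬ (3:ℤ) ∣ Q := by
        intro hd
        have h3u := hcopPQ.isUnit_of_dvd' ⟨R, hR⟩ hd
        rcases Int.isUnit_iff.mp h3u with h | h <;> norm_num at h
      have hR0 : R ≠ 0 := fun h => hP0 (by rw [hR, h, mul_zero])
      have hcopQR : IsCoprime Q R := by
        obtain ⟨u, v, huv⟩ := hcopPQ
        rw [hR] at huv
        exact ⟨v, 3 * u, by linear_combination huv⟩
      have hQRodd : ¬ Even (Q + R) := by
        intro h1
        apply hPQodd
        obtain ⟨c, hc⟩ := h1
        rw [hR]
        exact ⟨R + c, by omega⟩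
      have hparQR : ¬ 2 ∣ (Q ^ 2 + 3 * R ^ 2) := by
        intro hd
        obtain ⟨c, hc⟩ := hd
        exact parity_helper hQRodd ⟨c, by omega⟩
      have h3X : ¬ (3:ℤ) ∣ (Q ^ 2 + 3 * R ^ 2) := by
        intro hd
        obtain ⟨c, hc⟩ := hd
        have : (3:ℤ) ∣ Q ^ 2 := ⟨c - R ^ 2, by linarith⟩
        exact hQ3 (Int.prime_three.dvd_of_dvd_pow this)
      have hc3 : IsCoprime (3:ℤ) (Q ^ 2 + 3 * R ^ 2) :=
        (Int.prime_three.coprime_iff_not_dvd).mpr h3X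
      have hcR : IsCoprime R (Q ^ 2 + 3 * R ^ 2) := by
        have h1 : IsCoprime R (Q ^ 2) := hcopQR.symm.pow_right
        have h2 := h1.add_mul_left_right (3 * R)
        exact (show Q ^ 2 + R * (3 * R) = Q ^ 2 + 3 * R ^ 2 by ring) ▸ h2
      have hc9R : IsCoprime (9 * R) (Q ^ 2 + 3 * R ^ 2) := by
        have h1 : IsCoprime ((3:ℤ) * (3 * R)) (Q ^ 2 + 3 * R ^ 2) :=
          hc3.mul_left (hc3.mul_left hcR)
        exact (show (3:ℤ) * (3 * R) = 9 * R by ring) ▸ h1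
      obtain ⟨a, ha⟩ := int_cube_of_coprime (z := z) hc9R (by linear_combination -hz9)
      obtain ⟨b, hbq⟩ := int_cube_of_coprime (z := z) hc9R.symm (by linear_combination -hz9)
      obtain ⟨s, t, hQst, hRst⟩ := euler_key Q R b hcopQR hparQR hQ3 hbq
      have h3a : (3:ℤ) ∣ a :=
        Int.prime_three.dvd_of_dvd_pow (show (3:ℤ) ∣ a ^ 3 from ⟨3 * R, by rw [← ha]; ring⟩)
      obtain ⟨a1, ha1⟩ := h3a
      have hprod : t * ((s - t) * (s + t)) = a1 ^ 3 := by
        rw [ha1] at ha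
        exact mul_left_cancel₀ (show (27:ℤ) ≠ 0 by norm_num)
          (show (27:ℤ) * (t * ((s - t) * (s + t))) = 27 * a1 ^ 3 by linear_combination ha - 9 * hRst)
      have hst : IsCoprime s t := by
        apply IsRelPrime.isCoprime
        intro d hds hdt
        have hdQ : d ∣ Q := by
          rw [hQst]
          exact dvd_sub (dvd_pow hds (by norm_num)) ((hds.mul_left 9).mul_right (t ^ 2))
        have hdR : d ∣ R := by
          rw [hRst]
          exact dvd_sub ((hdt.mul_left (3 * s ^ 2))) ((dvd_pow hdt (by norm_num)).mul_left 3)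
        exact hcopQR.isUnit_of_dvd' hdQ hdR
      have ht0 : t ≠ 0 := by
        intro h
        apply hR0
        rw [hRst, h]; ring
      have hs0 : s ≠ 0 := by
        intro h
        apply hQ0
        rw [hQst, h]; ring
      -- opposite parity of s, t
      have hstodd : ¬ Even (s + t) := by
        intro hev
        rcases Int.even_or_odd s with hs | hs
        · -- both even
          obtain ⟨k, hk⟩ := hs
          have htev : Even t := by
            obtain ⟨c, hc⟩ := hev
            exact ⟨c - k, by omega⟩
          obtain ⟨l, hl⟩ := htev
          exact hunit2 (hst.isUnit_of_dvd' ⟨k, by omega⟩ ⟨l, by omega⟩)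
        · -- both odd
          obtain ⟨k, hk⟩ := hs
          have htodd : Odd t := by
            obtain ⟨c, hc⟩ := hev
            exact ⟨c - k - 1, by omega⟩
          obtain ⟨l, hl⟩ := htodd
          have h2Q : (2:ℤ) ∣ Q := by
            rw [hQst, hk, hl]
            exact ⟨4*k^3+6*k^2-6*k-36*k*l^2-36*k*l-18*l^2-18*l-4, by ring⟩
          have h2R : (2:ℤ) ∣ R := by
            rw [hRst, hk, hl]
            exact ⟨3*(2*l+1)*(2*k^2+2*k-2*l^2-2*l), by ring⟩
          exact hunit2 (hcopQR.isUnit_of_dvd' h2Q h2R)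
      have hsubodd : ¬ Even (s - t) := by
        intro hev
        obtain ⟨c, hc⟩ := hev
        exact hstodd ⟨c + t, by omega⟩
      -- pairwise coprimality of t, s-t, s+t
      have c1 : IsCoprime t (s - t) := by
        have h1 := hst.symm.add_mul_left_right (-1)
        exact (show s + t * (-1) = s - t by ring) ▸ h1
      have c2 : IsCoprime t (s + t) := by
        have h1 := hst.symm.add_mul_left_right 1
        exact (show s + t * 1 = s + t by ring) ▸ h1
      have c3 : IsCoprime (s - t) (s + t) := by
        apply IsRelPrime.isCoprime
        intro d hd1 hd2
        have hd2s : d ∣ 2 * s := by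
          have := dvd_add hd1 hd2
          exact (show (s - t) + (s + t) = 2 * s by ring) ▸ this
        have hd2t : d ∣ 2 * t := by
          have := dvd_sub hd2 hd1
          exact (show (s + t) - (s - t) = 2 * t by ring) ▸ this
        obtain ⟨u, v, huv⟩ := hst
        have hd2 : d ∣ 2 := by
          have h1 : d ∣ u * (2 * s) + v * (2 * t) := dvd_add (hd2s.mul_left u) (hd2t.mul_left v)
          exact (show u * (2 * s) + v * (2 * t) = 2 by linear_combination 2 * huv) ▸ h1
        have hodd : ¬ (2:ℤ) ∣ (s - t) := by
          intro hdd
          obtain ⟨c, hc⟩ := hdd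
          exact hsubodd ⟨c, by omega⟩
        exact ((Int.prime_two.coprime_iff_not_dvd).mpr hodd).isUnit_of_dvd' hd2 hd1
      obtain ⟨h1, f, g, hh1, hf, hg⟩ := int_cubes3 (c1) (c2) c3 hprod
      -- new solution : g³ + (-f)³ = 2 h1³
      have hnew : g ^ 3 + (-f) ^ 3 = 2 * h1 ^ 3 := by
        linear_combination -hg + hf + 2 * hh1
      have hh10 : h1 ≠ 0 := by
        intro h
        rw [h] at hh1
        exact ht0 (by rw [hh1]; ring)
      -- size estimate
      have hs2t2 : s ^ 2 - t ^ 2 ≠ 0 := by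
        intro h
        rcases mul_eq_zero.mp (show (s - t) * (s + t) = 0 by linear_combination h) with h' | h'
        · exact hsubodd (by rw [h']; exact Even.zero)
        · exact hstodd (by rw [h']; exact Even.zero)
      -- size estimate
      have hXpos : 1 ≤ Q ^ 2 + 3 * R ^ 2 := by
        have h0 : 0 < Q ^ 2 := pow_two_pos_of_ne_zero hQ0
        nlinarith [sq_nonneg R, Int.add_one_le_iff.mpr h0]
      have e1 : |z| ^ 3 = 9 * |R| * (Q ^ 2 + 3 * R ^ 2) := by
        have h0 : |z| ^ 3 = |z ^ 3| := (abs_pow z 3).symm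
        rw [h0, hz9, abs_mul, abs_mul]
        rw [abs_of_nonneg (show (0:ℤ) ≤ 9 by norm_num),
          abs_of_nonneg (show (0:ℤ) ≤ Q ^ 2 + 3 * R ^ 2 by nlinarith [sq_nonneg Q, sq_nonneg R])]
      have e2 : 3 * |t| ≤ |R| := by
        have hRf : R = 3 * t * (s ^ 2 - t ^ 2) := by linear_combination hRst
        rw [hRf, abs_mul, abs_mul]
        rw [show |(3:ℤ)| = 3 by norm_num]
        nlinarith [Int.one_le_abs hs2t2, abs_nonneg t]
      have e3 : |t| = |h1| ^ 3 := by rw [hh1, abs_pow]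
      have hbig : 27 * |h1| ^ 3 ≤ |z| ^ 3 := by
        rw [e1, ← e3]
        calc 27 * |t| = (9 * (3 * |t|)) * 1 := by ring
          _ ≤ (9 * |R|) * (Q ^ 2 + 3 * R ^ 2) :=
              mul_le_mul (by linarith [e2]) hXpos (by norm_num) (by positivity)
          _ = 9 * |R| * (Q ^ 2 + 3 * R ^ 2) := by ring
      have h1a : 1 ≤ |h1| := Int.one_le_abs hh10
      have hzabs : |h1| < |z| := by
        by_contra hle
        push_neg at hle
        have h7 : |z| ^ 3 ≤ |h1| ^ 3 := pow_le_pow_left₀ (abs_nonneg z) hle 3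
        have h8 : (1:ℤ) ≤ |h1| ^ 3 := by
          have := pow_le_pow_left₀ (by norm_num : (0:ℤ) ≤ 1) h1a 3
          simpa using this
        linarith [hbig, h7, h8]
      have hlt : h1.natAbs < N := by
        rw [← hN]
        rw [Int.abs_eq_natAbs, Int.abs_eq_natAbs] at hzabs
        exact_mod_cast hzabs
      rcases IH _ hlt h1 g (-f) rfl hnew with hcase | hcase
      · exact hh10 hcase
      · apply hs0
        rw [hcase] at hg
        have h9 : 2 * s = 0 := by linear_combination hg + hf
        omega
    · -- case ¬ 3 ∣ P
      have hcP3 : IsCoprime P (3:ℤ) := ((Int.prime_three.coprime_iff_not_dvd).mpr h3P).symm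
      have hbase : IsCoprime P (3 * Q ^ 2) := hcP3.mul_right hcopPQ.pow_right
      have hcP : IsCoprime P (P ^ 2 + 3 * Q ^ 2) := by
        have h1 := hbase.add_mul_left_right P
        exact (show 3 * Q ^ 2 + P * P = P ^ 2 + 3 * Q ^ 2 by ring) ▸ h1
      obtain ⟨a, ha⟩ := int_cube_of_coprime (z := z) hcP (by linear_combination -hz3)
      obtain ⟨b, hbq⟩ := int_cube_of_coprime (z := z) hcP.symm (by linear_combination -hz3)
      obtain ⟨s, t, hPst, hQst⟩ := euler_key P Q b hcopPQ hparity h3P hbq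
      have h3s : ¬ (3:ℤ) ∣ s := by
        rintro ⟨k, hk⟩
        exact h3P ⟨k * (s ^ 2 - 9 * t ^ 2), by rw [hPst, hk]; ring⟩
      have hst : IsCoprime s t := by
        apply IsRelPrime.isCoprime
        intro d hds hdt
        have hdP : d ∣ P := by
          rw [hPst]
          exact dvd_sub (dvd_pow hds (by norm_num)) ((hds.mul_left 9).mul_right (t ^ 2))
        have hdQ : d ∣ Q := by
          rw [hQst]
          exact dvd_sub ((hdt.mul_left (3 * s ^ 2))) ((dvd_pow hdt (by norm_num)).mul_left 3)
        exact hcopPQ.isUnit_of_dvd' hdP hdQ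
      have hs0 : s ≠ 0 := by
        intro h
        apply hP0
        rw [hPst, h]; ring
      have ht0 : t ≠ 0 := by
        intro h
        apply hQ0
        rw [hQst, h]; ring
      have hstodd : ¬ Even (s + t) := by
        intro hev
        rcases Int.even_or_odd s with hs | hs
        · obtain ⟨k, hk⟩ := hs
          have htev : Even t := by
            obtain ⟨c, hc⟩ := hev
            exact ⟨c - k, by omega⟩
          obtain ⟨l, hl⟩ := htev
          exact hunit2 (hst.isUnit_of_dvd' ⟨k, by omega⟩ ⟨l, by omega⟩)
        · obtain ⟨k, hk⟩ := hs
          have htodd : Odd t := by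
            obtain ⟨c, hc⟩ := hev
            exact ⟨c - k - 1, by omega⟩
          obtain ⟨l, hl⟩ := htodd
          have h2P : (2:ℤ) ∣ P := by
            rw [hPst, hk, hl]
            exact ⟨4*k^3+6*k^2-6*k-36*k*l^2-36*k*l-18*l^2-18*l-4, by ring⟩
          have h2Q : (2:ℤ) ∣ Q := by
            rw [hQst, hk, hl]
            exact ⟨3*(2*l+1)*(2*k^2+2*k-2*l^2-2*l), by ring⟩
          exact hunit2 (hcopPQ.isUnit_of_dvd' h2P h2Q)
      have hsub3odd : ¬ Even (s - 3 * t) := by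
        intro hev
        obtain ⟨c, hc⟩ := hev
        exact hstodd ⟨c + 2 * t, by omega⟩
      have hadd3odd : ¬ Even (s + 3 * t) := by
        intro hev
        obtain ⟨c, hc⟩ := hev
        exact hstodd ⟨c - t, by omega⟩
      have hs3t : IsCoprime s (3 * t) :=
        (((Int.prime_three.coprime_iff_not_dvd).mpr h3s).symm).mul_right hst
      have c1 : IsCoprime s (s - 3 * t) := by
        have h1 := hs3t.neg_right.add_mul_left_right 1
        exact (show -(3 * t) + s * 1 = s - 3 * t by ring) ▸ h1
      have c2 : IsCoprime s (s + 3 * t) := by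
        have h1 := hs3t.add_mul_left_right 1
        exact (show 3 * t + s * 1 = s + 3 * t by ring) ▸ h1
      have c3 : IsCoprime (s - 3 * t) (s + 3 * t) := by
        apply IsRelPrime.isCoprime
        intro d hd1 hd2
        have hd2s : d ∣ 2 * s := by
          have := dvd_add hd1 hd2
          exact (show (s - 3 * t) + (s + 3 * t) = 2 * s by ring) ▸ this
        have hd6t : d ∣ 6 * t := by
          have := dvd_sub hd2 hd1
          exact (show (s + 3 * t) - (s - 3 * t) = 6 * t by ring) ▸ this
        obtain ⟨u, v, huv⟩ := hs3t
        have hdd2 : d ∣ 2 := by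
          have h1 : d ∣ u * (2 * s) + v * (6 * t) := dvd_add (hd2s.mul_left u) (hd6t.mul_left v)
          exact (show u * (2 * s) + v * (6 * t) = 2 by linear_combination 2 * huv) ▸ h1
        have hoddd : ¬ (2:ℤ) ∣ (s - 3 * t) := by
          intro hdd
          obtain ⟨c, hc⟩ := hdd
          exact hsub3odd ⟨c, by omega⟩
        exact ((Int.prime_two.coprime_iff_not_dvd).mpr hoddd).isUnit_of_dvd' hdd2 hd1
      have hprod : s * ((s - 3 * t) * (s + 3 * t)) = a ^ 3 := by
        linear_combination ha - hPst
      obtain ⟨h1, f, g, hh1, hf, hg⟩ := int_cubes3 c1 c2 c3 hprod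
      have hnew : f ^ 3 + g ^ 3 = 2 * h1 ^ 3 := by
        linear_combination -hf - hg + 2 * hh1
      have hh10 : h1 ≠ 0 := by
        intro h
        rw [h] at hh1
        exact hs0 (by rw [hh1]; ring)
      -- size estimate
      have hs9t : s ^ 2 - 9 * t ^ 2 ≠ 0 := by
        intro h
        apply h3s
        have h3s2 : (3:ℤ) ∣ s ^ 2 := ⟨3 * t ^ 2, by linarith⟩
        exact Int.prime_three.dvd_of_dvd_pow h3s2
      have e1 : |z| ^ 3 = |P| * (P ^ 2 + 3 * Q ^ 2) := by
        have h0 : |z| ^ 3 = |z ^ 3| := (abs_pow z 3).symm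
        rw [h0, hz3, abs_mul,
          abs_of_nonneg (show (0:ℤ) ≤ P ^ 2 + 3 * Q ^ 2 by nlinarith [sq_nonneg P, sq_nonneg Q])]
      have e2 : |s| ≤ |P| := by
        have hPf : P = s * (s ^ 2 - 9 * t ^ 2) := by linear_combination hPst
        rw [hPf, abs_mul]
        nlinarith [Int.one_le_abs hs9t, abs_nonneg s]
      have e3 : |s| = |h1| ^ 3 := by rw [hh1, abs_pow]
      have hbig : 4 * |h1| ^ 3 ≤ |z| ^ 3 := by
        rw [e1, ← e3]
        calc 4 * |s| = |s| * 4 := by ring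
          _ ≤ |P| * (P ^ 2 + 3 * Q ^ 2) := mul_le_mul e2 hX4 (by norm_num) (abs_nonneg P)
      have h1a : 1 ≤ |h1| := Int.one_le_abs hh10
      have hzabs : |h1| < |z| := by
        by_contra hle
        push_neg at hle
        have h7 : |z| ^ 3 ≤ |h1| ^ 3 := pow_le_pow_left₀ (abs_nonneg z) hle 3
        have h8 : (1:ℤ) ≤ |h1| ^ 3 := by
          have := pow_le_pow_left₀ (by norm_num : (0:ℤ) ≤ 1) h1a 3
          simpa using this
        linarith [hbig, h7, h8]
      have hlt : h1.natAbs < N := by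
        rw [← hN]
        rw [Int.abs_eq_natAbs, Int.abs_eq_natAbs] at hzabs
        exact_mod_cast hzabs
      rcases IH _ hlt h1 f g rfl hnew with hcase | hcase
      · exact hh10 hcase
      · apply ht0
        rw [hcase] at hf
        have h9 : 6 * t = 0 := by linear_combination hg - hf
        omega

end IntPart

theorem stmt_9 (a b c : ℤ) (ha : a ≠ 0) (hb : b ≠ 0) (hc : c ≠ 0)
    (h : a ^ 3 + 2 * b ^ 3 + c ^ 3 = 0) :
    a = -b ∧ -b = c := by
  have key := euler_aux ((-b).natAbs) (-b) a c rfl (by linear_combination h)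
  rcases key with h0 | hac
  · exact absurd (neg_eq_zero.mp h0) hb
  · have h2 : 2 * a ^ 3 = 2 * (-b) ^ 3 := by
      rw [← hac] at h
      linear_combination h
    have hab : a = -b := int_cube_inj (mul_left_cancel₀ two_ne_zero h2)
    exact ⟨hab, by rw [← hab]; exact hac⟩
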